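/- The connective K-theory divided difference operators φ_i (for 1 ≤ i ≤ n−2) satisfy the braid relation φ_i φ_{i+1} φ_i = φ_{i+1} φ_i φ_{i+1} on polynomials in x₁,…,x_n over ℤ[β], where φ_i(P) = ((1 − βx_i)P − (1 − βx_{i+1})σ_i(P))/(x_i − x_{i+1}). -/

import Mathlib

open MvPolynomial
open scoped Classical

/-- `β` as the constant of `ℤ[β][x₁,…,x_n]`. -/
noncomputable def betaP (n : ℕ) : MvPolynomial (Fin n) (Polynomial ℤ) :=
  C Polynomial.X

/-- The connective K-theory divided difference operator
`φ_{a,b}(P) = ((1 − βx_a)P − (1 − βx_b)σ_{a,b}(P))/(x_a − x_b)` on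
`ℤ[β][x₁,…,x_n]`; it is well defined since the numerator is divisible by
`x_a − x_b` (and, the quotient being unique in an integral domain, it is
extracted here via the witness of that divisibility). -/

noncomputable def phiOp {n : ℕ} (a b : Fin n)
    (P : MvPolynomial (Fin n) (Polynomial ℤ)) : MvPolynomial (Fin n) (Polynomial ℤ) :=
  if h : (X a - X b) ∣
      ((1 - betaP n * X a) * P - (1 - betaP n * X b) * rename (Equiv.swap a b) P) then
    Classical.choose h
  else 0

/-!
With `u_i = 1 - βx_i`, one has `φ_{a,b} = ∂_{a,b} ∘ u_a` for the ordinary divided difference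
`∂_{a,b}`, so both braid words should equal `∂_{w₀} ∘ u_a² u_b`. Concretely, multiplying either word
applied to `P` by the Vandermonde `(x_a - x_b)(x_b - x_c)(x_a - x_c)` gives the antisymmetrization of
`u_a² u_b P` over the permutations of `a, b, c`. This is checked by substituting the defining relation
of each `φ` in turn, transported along the swaps composed with it, using that `φ_{a,b}(P)` is
symmetric in `x_a, x_b` and that `s_{a,b} s_{b,c} s_{a,b} = s_{b,c} s_{a,b} s_{b,c} = s_{a,c}`.
-/

open Equiv

theorem X_sub_X_dvd_sub_rename_swap {R σ : Type*} [CommRing R] [DecidableEq σ] (a b : σ)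
    (P : MvPolynomial σ R) : (X a - X b) ∣ P - rename (swap a b) P := by
  induction P using MvPolynomial.induction_on with
  | C r => simp
  | add p q hp hq =>
    rw [map_add, add_sub_add_comm]
    exact dvd_add hp hq
  | mul_X p j hp =>
    have key : (X a - X b : MvPolynomial σ R) ∣ X j - X (swap a b j) := by
      rcases eq_or_ne j a with rfl | hja
      · simp
      rcases eq_or_ne j b with rfl | hjb
      · rw [swap_apply_right, dvd_sub_comm]
      · simp [swap_apply_of_ne_of_ne hja hjb]
    have h : p * X j - rename (swap a b) (p * X j)
        = (p - rename (swap a b) p) * X j + rename (swap a b) p * (X j - X (swap a b j)) := by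
      rw [map_mul, rename_X]; ring
    rw [h]
    exact dvd_add (hp.mul_right _) (key.mul_left _)

theorem X_sub_X_ne_zero {R σ : Type*} [CommRing R] [Nontrivial R] {a b : σ} (hab : a ≠ b) :
    (X a - X b : MvPolynomial σ R) ≠ 0 :=
  sub_ne_zero.mpr fun h => hab (X_injective h)

theorem swap_mul_swap_mul_swap' {α : Type*} [DecidableEq α] {a b c : α} (hac : a ≠ c)
    (hbc : b ≠ c) : swap a b * swap b c * swap a b = swap a c := by
  calc swap a b * swap b c * swap a b = swap a b * swap b c * (swap a b)⁻¹ := by rw [swap_inv]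
    _ = swap (swap a b b) (swap a b c) := (swap_apply_apply _ _ _).symm
    _ = swap a c := by rw [swap_apply_right, swap_apply_of_ne_of_ne hac.symm hbc.symm]

section Braid

variable {n : ℕ}

local notation "𝔲" i:max => (1 - betaP _ * X i)

theorem rename_betaP {m : ℕ} (f : Fin n → Fin m) : rename f (betaP n) = betaP m := by
  simp [betaP]

theorem X_sub_X_mul_phiOp (a b : Fin n) (P : MvPolynomial (Fin n) (Polynomial ℤ)) :
    (X a - X b) * phiOp a b P = 𝔲 a * P - 𝔲 b * rename (swap a b) P := by
  have hdvd : (X a - X b) ∣ 𝔲 a * P - 𝔲 b * rename (swap a b) P := by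
    have h : 𝔲 a * P - 𝔲 b * rename (swap a b) P
        = 𝔲 a * (P - rename (swap a b) P) - (X a - X b) * (betaP n * rename (swap a b) P) := by
      ring
    rw [h]
    exact dvd_sub ((X_sub_X_dvd_sub_rename_swap a b P).mul_left _) (dvd_mul_right _ _)
  rw [phiOp, dif_pos hdvd]
  exact (Classical.choose_spec hdvd).symm

theorem X_sub_X_mul_rename_phiOp {a b a' b' : Fin n} {τ : Perm (Fin n)} (ha : τ a = a')
    (hb : τ b = b') (P : MvPolynomial (Fin n) (Polynomial ℤ)) :
    (X a' - X b') * rename τ (phiOp a b P)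
      = 𝔲 a' * rename τ P - 𝔲 b' * rename ⇑(τ * swap a b) P := by
  have h := congrArg (rename τ) (X_sub_X_mul_phiOp a b P)
  simpa only [map_sub, map_mul, map_one, rename_X, rename_betaP, rename_rename, Perm.coe_mul,
    ha, hb] using h

theorem rename_swap_phiOp {a b : Fin n} (hab : a ≠ b) (P : MvPolynomial (Fin n) (Polynomial ℤ)) :
    rename (swap a b) (phiOp a b P) = phiOp a b P := by
  have h := X_sub_X_mul_rename_phiOp (swap_apply_left a b) (swap_apply_right a b) P
  rw [swap_mul_self, Perm.coe_one, rename_id, AlgHom.id_apply] at h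
  apply mul_left_cancel₀ (X_sub_X_ne_zero hab)
  rw [X_sub_X_mul_phiOp]
  linear_combination -h

noncomputable def braidNumerator (a b c : Fin n) (P : MvPolynomial (Fin n) (Polynomial ℤ)) :
    MvPolynomial (Fin n) (Polynomial ℤ) :=
  𝔲 a ^ 2 * 𝔲 b * P - 𝔲 b ^ 2 * 𝔲 a * rename (swap a b) P
    - 𝔲 a ^ 2 * 𝔲 c * rename (swap b c) P + 𝔲 b ^ 2 * 𝔲 c * rename ⇑(swap a b * swap b c) P
    + 𝔲 c ^ 2 * 𝔲 a * rename ⇑(swap b c * swap a b) P - 𝔲 c ^ 2 * 𝔲 b * rename (swap a c) P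

variable {a b c : Fin n} (hab : a ≠ b) (hac : a ≠ c) (hbc : b ≠ c)
include hab hac hbc

theorem vandermonde_mul_phiOp_ab_bc_ab (P : MvPolynomial (Fin n) (Polynomial ℤ)) :
    (X a - X b) * (X b - X c) * (X a - X c) * phiOp a b (phiOp b c (phiOp a b P))
      = braidNumerator a b c P := by
  set A := phiOp a b P
  set B := phiOp b c A
  have h1 := X_sub_X_mul_phiOp a b P
  have h1t := X_sub_X_mul_rename_phiOp (τ := swap b c) (swap_apply_of_ne_of_ne hab hac)
    (swap_apply_left b c) P
  have h1st := X_sub_X_mul_rename_phiOp (τ := swap a b * swap b c)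
    (by rw [Perm.mul_apply, swap_apply_of_ne_of_ne hab hac, swap_apply_left])
    (by rw [Perm.mul_apply, swap_apply_left, swap_apply_of_ne_of_ne hac.symm hbc.symm]) P
  rw [swap_mul_swap_mul_swap' hac hbc] at h1st
  have h2 := X_sub_X_mul_phiOp b c A
  have h2s := X_sub_X_mul_rename_phiOp (τ := swap a b) (swap_apply_right a b)
    (swap_apply_of_ne_of_ne hac.symm hbc.symm) A
  rw [rename_swap_phiOp hab] at h2s
  calc (X a - X b) * (X b - X c) * (X a - X c) * phiOp a b B
      = (X b - X c) * (X a - X c) * ((X a - X b) * phiOp a b B) := by ring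
    _ = (X a - X c) * 𝔲 a * ((X b - X c) * B)
          - (X b - X c) * 𝔲 b * ((X a - X c) * rename (swap a b) B) := by
      rw [X_sub_X_mul_phiOp]; ring
    _ = 𝔲 a * 𝔲 b * ((X a - X b) * A) - 𝔲 a * 𝔲 c * ((X a - X c) * rename (swap b c) A)
          + 𝔲 b * 𝔲 c * ((X b - X c) * rename ⇑(swap a b * swap b c) A) := by
      rw [h2, h2s]; ring
    _ = braidNumerator a b c P := by
      rw [h1, h1t, h1st, braidNumerator]; ring

theorem vandermonde_mul_phiOp_bc_ab_bc (P : MvPolynomial (Fin n) (Polynomial ℤ)) :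
    (X a - X b) * (X b - X c) * (X a - X c) * phiOp b c (phiOp a b (phiOp b c P))
      = braidNumerator a b c P := by
  set A := phiOp b c P
  set B := phiOp a b A
  have h1 := X_sub_X_mul_phiOp b c P
  have h1s := X_sub_X_mul_rename_phiOp (τ := swap a b) (swap_apply_right a b)
    (swap_apply_of_ne_of_ne hac.symm hbc.symm) P
  have h1ts := X_sub_X_mul_rename_phiOp (τ := swap b c * swap a b)
    (by rw [Perm.mul_apply, swap_apply_right, swap_apply_of_ne_of_ne hab hac])
    (by rw [Perm.mul_apply, swap_apply_of_ne_of_ne hac.symm hbc.symm, swap_apply_right]) P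
  rw [swap_mul_swap_mul_swap hab hac, swap_comm c a] at h1ts
  have h2 := X_sub_X_mul_phiOp a b A
  have h2t := X_sub_X_mul_rename_phiOp (τ := swap b c) (swap_apply_of_ne_of_ne hab hac)
    (swap_apply_left b c) A
  rw [rename_swap_phiOp hbc] at h2t
  calc (X a - X b) * (X b - X c) * (X a - X c) * phiOp b c B
      = (X a - X b) * (X a - X c) * ((X b - X c) * phiOp b c B) := by ring
    _ = (X a - X c) * 𝔲 b * ((X a - X b) * B)
          - (X a - X b) * 𝔲 c * ((X a - X c) * rename (swap b c) B) := by
      rw [X_sub_X_mul_phiOp]; ring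
    _ = 𝔲 a ^ 2 * ((X b - X c) * A) - 𝔲 b ^ 2 * ((X a - X c) * rename (swap a b) A)
          + 𝔲 c ^ 2 * ((X a - X b) * rename ⇑(swap b c * swap a b) A) := by
      rw [h2, h2t]; ring
    _ = braidNumerator a b c P := by
      rw [h1, h1s, h1ts, braidNumerator]; ring

end Braid

/-- The braid relation `φ_i φ_{i+1} φ_i = φ_{i+1} φ_i φ_{i+1}` for the
connective K-theory divided difference operators on `ℤ[β][x₁,…,x_n]`. -/
theorem phi_braid {n : ℕ} (i : ℕ) (hi : i + 2 < n)
    (P : MvPolynomial (Fin n) (Polynomial ℤ)) :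
    phiOp ⟨i, by omega⟩ ⟨i + 1, by omega⟩
        (phiOp ⟨i + 1, by omega⟩ ⟨i + 2, hi⟩
          (phiOp ⟨i, by omega⟩ ⟨i + 1, by omega⟩ P)) =
      phiOp ⟨i + 1, by omega⟩ ⟨i + 2, hi⟩
        (phiOp ⟨i, by omega⟩ ⟨i + 1, by omega⟩
          (phiOp ⟨i + 1, by omega⟩ ⟨i + 2, hi⟩ P)) := by
  have hab : (⟨i, by omega⟩ : Fin n) ≠ ⟨i + 1, by omega⟩ := by simp
  have hac : (⟨i, by omega⟩ : Fin n) ≠ ⟨i + 2, hi⟩ := by simp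
  have hbc : (⟨i + 1, by omega⟩ : Fin n) ≠ ⟨i + 2, hi⟩ := by simp
  apply mul_left_cancel₀ (mul_ne_zero (mul_ne_zero (X_sub_X_ne_zero (R := Polynomial ℤ) hab)
    (X_sub_X_ne_zero hbc)) (X_sub_X_ne_zero hac))
  rw [vandermonde_mul_phiOp_ab_bc_ab hab hac hbc,
    vandermonde_mul_phiOp_bc_ab_bc hab hac hbc]
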